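/- Let Γ be a group and N a normal subgroup such that N has bounded finite subgroups and Γ/N is Jordan with a uniform bound R on the number of generators of finite subgroups. Then every finite subgroup G of Γ contains a normal abelian subgroup of index bounded by a constant depending only on the bounds for N and Γ/N. -/

import Mathlib

/-!
Let `f : G →* Q` have kernel `K` and let `H ≤ G` be the preimage of an abelian subgroup of index
at most `J` in `f(G)`. Commutators of elements of `H` lie in `K`, so every `t ∈ H` has at most
`|K|` conjugates under `H`. Lifting at most `R` generators of `f(H)` to a set `T ⊆ H` gives
`H ≤ ⟨T⟩ ⊔ K`. The elements of `H` centralizing `K` (index at most `|K|!`, as `K` is normal)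
and `T` (relative index at most `|K|^R`) therefore centralize all of `H`, so they form an
abelian subgroup of bounded index; its normal core has index at most the factorial of that
bound.
-/

open scoped Nat commutatorElement

def IsJordanWith (Q : Type*) [Group Q] (J : ℕ) : Prop :=
  ∀ G' : Subgroup Q, Finite G' →
    ∃ A : Subgroup G', A.Normal ∧ IsMulCommutative A ∧ A.index ≤ J

def FiniteSubgroupsRankLE (Q : Type*) [Group Q] (R : ℕ) : Prop :=
  ∀ G' : Subgroup Q, Finite G' →
    ∃ S : Set G', S.Finite ∧ Nat.card S ≤ R ∧ Subgroup.closure S = ⊤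

namespace Subgroup

variable {G Q : Type*} [Group G] [Group Q]

theorem normalCore_index_dvd_factorial (H : Subgroup G) [H.FiniteIndex] :
    H.normalCore.index ∣ H.index ! := by
  rw [normalCore_eq_ker, index_ker, index_eq_card, ← Nat.card_perm]
  exact card_subgroup_dvd_card _

theorem index_centralizer_dvd_factorial (K : Subgroup G) [K.Normal] [Finite K] :
    (centralizer (K : Set G)).index ∣ (Nat.card K)! := by
  have : centralizer (K : Set G) = ((MulAut.toPerm (M := K)).comp MulAut.conjNormal).ker := by
    ext g
    simp only [mem_centralizer_iff, MonoidHom.mem_ker, Equiv.ext_iff, Subtype.ext_iff,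
      Subtype.forall]
    refine forall₂_congr fun k hk => ?_
    change k * g = g * k ↔ ((MulAut.conjNormal g ⟨k, hk⟩ : K) : G) = k
    rw [MulAut.conjNormal_apply, mul_inv_eq_iff_eq_mul, eq_comm]
  rw [this, index_ker, ← Nat.card_perm]
  exact card_subgroup_dvd_card _

theorem commutatorElement_eq_iff_inv_mul_mem_centralizer {a b t : G} :
    ⁅a, t⁆ = ⁅b, t⁆ ↔ a⁻¹ * b ∈ centralizer {t} := by
  rw [commutatorElement_def, commutatorElement_def, mul_left_inj, mem_centralizer_singleton_iff]
  constructor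
  · intro h
    calc a⁻¹ * b * t = a⁻¹ * (b * t * b⁻¹) * b := by group
      _ = a⁻¹ * (a * t * a⁻¹) * b := by rw [h]
      _ = t * (a⁻¹ * b) := by group
  · intro h
    calc a * t * a⁻¹ = a * (t * (a⁻¹ * b)) * b⁻¹ := by group
      _ = a * (a⁻¹ * b * t) * b⁻¹ := by rw [h]
      _ = b * t * b⁻¹ := by group

theorem relIndex_centralizer_le_card {H K : Subgroup G} [Finite K] {t : G}
    (h : ∀ g ∈ H, ⁅g, t⁆ ∈ K) : (centralizer {t}).relIndex H ≤ Nat.card K := by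
  let f : H ⧸ (centralizer {t}).subgroupOf H → K :=
    Quotient.lift (fun g => ⟨⁅(g : G), t⁆, h g g.2⟩) fun _ _ hab =>
      Subtype.ext (commutatorElement_eq_iff_inv_mul_mem_centralizer.mpr
        (mem_subgroupOf.mp (QuotientGroup.leftRel_apply.mp hab)))
  refine Nat.card_le_card_of_injective f ?_
  rintro ⟨a⟩ ⟨b⟩ hab
  exact QuotientGroup.eq.mpr <| mem_subgroupOf.mpr <|
    commutatorElement_eq_iff_inv_mul_mem_centralizer.mp (congrArg Subtype.val hab)

theorem relIndex_centralizer_finset_le {H K : Subgroup G} [Finite K] (T : Finset G)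
    (h : ∀ t ∈ T, ∀ g ∈ H, ⁅g, t⁆ ∈ K) :
    (centralizer (T : Set G)).relIndex H ≤ Nat.card K ^ T.card := by
  rw [centralizer_eq_iInf, ← iInf_subtype'']
  calc _ ≤ ∏ t : (T : Set G), (centralizer {(t : G)}).relIndex H := relIndex_iInf_le _
    _ ≤ ∏ _t : (T : Set G), Nat.card K :=
      Finset.prod_le_prod' fun t _ => relIndex_centralizer_le_card (h t t.2)
    _ = _ := by simp

theorem card_subgroupOf_comm (H K : Subgroup G) :
    Nat.card (H.subgroupOf K) = Nat.card (K.subgroupOf H) := by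
  rw [← inf_subgroupOf_right, ← inf_subgroupOf_right K, inf_comm,
    Nat.card_congr (subgroupOfEquivOfLe inf_le_right).toEquiv,
    Nat.card_congr (subgroupOfEquivOfLe inf_le_left).toEquiv]

theorem commutatorElement_mem_ker {f : G →* Q} {H : Subgroup G} [IsMulCommutative (H.map f)]
    {a b : G} (ha : a ∈ H) (hb : b ∈ H) : ⁅a, b⁆ ∈ f.ker := by
  rw [MonoidHom.mem_ker, map_commutatorElement, commutatorElement_eq_one_iff_mul_comm]
  exact setLike_mul_comm (mem_map_of_mem f ha) (mem_map_of_mem f hb)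

theorem exists_finset_le_closure_sup_ker {f : G →* Q} {H : Subgroup G} {S : Set (H.map f)}
    (hS : S.Finite) (hgen : closure S = ⊤) :
    ∃ T : Finset G, ↑T ⊆ (H : Set G) ∧ T.card ≤ Nat.card S ∧
      H ≤ closure T ⊔ f.ker := by
  classical
  choose lift hlift using f.subgroupMap_surjective H
  refine ⟨hS.toFinset.image fun s => (lift s : G), ?_, ?_, ?_⟩
  · simp only [Set.Finite.coe_toFinset, Finset.coe_image]
    exact Set.image_subset_iff.mpr fun s _ => (lift s).2
  · rw [Nat.card_eq_card_finite_toFinset hS]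
    exact Finset.card_image_le
  · rw [← map_le_map_iff, MonoidHom.map_closure]
    intro x hx
    have hxS : (⟨x, hx⟩ : H.map f) ∈ closure S := hgen ▸ mem_top _
    have := mem_map_of_mem (H.map f).subtype hxS
    rw [MonoidHom.map_closure] at this
    refine closure_mono ?_ this
    rintro _ ⟨s, hs, rfl⟩
    exact ⟨lift s, Finset.mem_image_of_mem _ (hS.mem_toFinset.mpr hs),
      congrArg Subtype.val (hlift s)⟩

end Subgroup

open Subgroup

variable {G Q : Type*} [Group G] [Group Q] {J R : ℕ}

theorem exists_isMulCommutative_index_le [Finite G] (f : G →* Q) (hJ : IsJordanWith Q J)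
    (hR : FiniteSubgroupsRankLE Q R) :
    ∃ A : Subgroup G, IsMulCommutative A ∧
      A.index ≤ (Nat.card f.ker)! * Nat.card f.ker ^ R * J := by
  obtain ⟨A', -, _, hA'J⟩ := hJ f.range (.of_surjective _ f.rangeRestrict_surjective)
  set H := A'.comap f.rangeRestrict
  have hH : H.index ≤ J := by rwa [index_comap_of_surjective _ f.rangeRestrict_surjective]
  have : IsMulCommutative (H.map f) := by
    rw [← f.subtype_comp_rangeRestrict, ← map_map,
      map_comap_eq_self_of_surjective f.rangeRestrict_surjective]
    infer_instance
  obtain ⟨S, hS, hSR, hgen⟩ := hR (H.map f) (.of_surjective _ (f.subgroupMap_surjective H))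
  obtain ⟨T, hTH, hTS, hHT⟩ := exists_finset_le_closure_sup_ker hS hgen
  set W := centralizer f.ker ⊓ centralizer T ⊓ H
  refine ⟨W, ?_, ?_⟩
  · have : Subgroup.closure T ⊔ f.ker ≤ centralizer W := by
      refine sup_le ?_ (le_centralizer_iff.mp (inf_le_left.trans inf_le_left))
      rw [← le_centralizer_iff, centralizer_closure]
      exact inf_le_left.trans inf_le_right
    exact le_centralizer_iff_isMulCommutative.mp (inf_le_right.trans (hHT.trans this))
  · have hK : (centralizer f.ker).relIndex H ≤ (Nat.card f.ker)! :=
      Nat.le_of_dvd (Nat.factorial_pos _)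
        ((relIndex_dvd_index_of_normal _ _).trans (index_centralizer_dvd_factorial _))
    have hT : (centralizer T).relIndex H ≤ Nat.card f.ker ^ R :=
      (relIndex_centralizer_finset_le T fun _ ht _ hg =>
        commutatorElement_mem_ker hg (hTH ht)).trans
          (Nat.pow_le_pow_right Nat.card_pos (hTS.trans hSR))
    calc W.index = (centralizer f.ker ⊓ centralizer T).relIndex H * H.index := by
          rw [← inf_relIndex_right, relIndex_mul_index inf_le_right]
      _ ≤ _ := Nat.mul_le_mul (relIndex_inf_le.trans (Nat.mul_le_mul hK hT)) hH

theorem exists_normal_isMulCommutative_index_le [Finite G] (f : G →* Q) (hJ : IsJordanWith Q J)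
    (hR : FiniteSubgroupsRankLE Q R) {B : ℕ} (hB : Nat.card f.ker ≤ B) :
    ∃ A : Subgroup G, A.Normal ∧ IsMulCommutative A ∧ A.index ≤ (B ! * B ^ R * J)! := by
  obtain ⟨A, hA, hAindex⟩ := exists_isMulCommutative_index_le f hJ hR
  refine ⟨A.normalCore, A.normalCore_normal, ?_, ?_⟩
  · rw [← le_centralizer_iff_isMulCommutative] at hA ⊢
    exact A.normalCore_le.trans (hA.trans (centralizer_le A.normalCore_le))
  · calc A.normalCore.index ≤ A.index ! :=
          Nat.le_of_dvd (Nat.factorial_pos _) A.normalCore_index_dvd_factorial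
      _ ≤ _ := Nat.factorial_le (hAindex.trans (by gcongr))

theorem jordan_of_extension_with_constant (B J R : ℕ) :
    ∃ C : ℕ, ∀ (Γ : Type) [Group Γ] (N : Subgroup Γ) [N.Normal],
      (∀ H : Subgroup N, Finite H → Nat.card H ≤ B) →
      (∀ G' : Subgroup (Γ ⧸ N), Finite G' →
        ∃ A : Subgroup G', A.Normal ∧ IsMulCommutative A ∧ A.index ≤ J) →
      (∀ G' : Subgroup (Γ ⧸ N), Finite G' →
        ∃ S : Set G', S.Finite ∧ Nat.card S ≤ R ∧ Subgroup.closure S = ⊤) →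
      ∀ G : Subgroup Γ, Finite G →
        ∃ A : Subgroup G, A.Normal ∧ IsMulCommutative A ∧ A.index ≤ C := by
  refine ⟨(B ! * B ^ R * J)!, fun Γ _ N _ hN hJ hR G _ => ?_⟩
  let f : G →* Γ ⧸ N := (QuotientGroup.mk' N).comp G.subtype
  have hker : f.ker = N.subgroupOf G := by
    rw [← MonoidHom.comap_ker, QuotientGroup.ker_mk']
    rfl
  have : Finite (G.subgroupOf N) :=
    Nat.finite_of_card_ne_zero (by rw [card_subgroupOf_comm]; exact Nat.card_pos.ne')
  refine exists_normal_isMulCommutative_index_le f hJ hR ?_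
  rw [hker, card_subgroupOf_comm]
  exact hN _ inferInstance
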